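/- arXiv:1804.05829 — 2 statements merged into one kernel-verified Lean document; each statement's English description precedes it below -/
import Mathlib

section
/- Let n and d be integers with 0 < d ≤ ⌊(n−1)/2⌋. If G is a nonhamiltonian simple graph on n vertices with minimum degree δ(G) ≥ d, then e(G) ≤ max{ h(n,d,0), h(n, ⌊(n−1)/2⌋, 0) }. -/
open SimpleGraph

/-- A linear forest: an acyclic graph with maximum degree at most 2. -/
def SimpleGraph.IsLinearForest {V : Type*} (F : SimpleGraph V) : Prop :=
  F.IsAcyclic ∧ ∀ v a b c : V, F.Adj v a → F.Adj v b → F.Adj v c → a = b ∨ a = c ∨ b = c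

/-- A graph is `ℓ`-hamiltonian if every linear forest with `ℓ` edges contained in it
extends to a hamiltonian cycle. -/
def SimpleGraph.IsLHamiltonian {V : Type*} [DecidableEq V] (G : SimpleGraph V) (ℓ : ℕ) : Prop :=
  ∀ F : SimpleGraph V, F ≤ G → F.IsLinearForest → F.edgeSet.ncard = ℓ →
    ∃ (v : V) (c : G.Walk v v), c.IsHamiltonianCycle ∧ ∀ e ∈ F.edgeSet, e ∈ c.edges

/-- The graph `H_{n,d,ℓ}`: a complete graph on `A = {0, …, n-d+ℓ-1}` together with `d-ℓ`
further vertices, each adjacent to the set `B = {0, …, d-1} ⊆ A`. -/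
def Hgraph (n d ℓ : ℕ) : SimpleGraph (Fin n) where
  Adj u v := u ≠ v ∧ ((u.val < n - d + ℓ ∧ v.val < n - d + ℓ) ∨
    (u.val < d ∧ n - d + ℓ ≤ v.val) ∨ (v.val < d ∧ n - d + ℓ ≤ u.val))
  symm := ⟨by intro u v h; exact ⟨h.1.symm, by tauto⟩⟩
  loopless := ⟨by intro v h; exact h.1 rfl⟩

/-- The graph `H'_{n,d,ℓ}`: a complete graph on `{0, …, n-d+ℓ-1}` and a complete graph on
`{n-d-1, …, n-1}` sharing `ℓ+1` vertices. -/
def H'graph (n d ℓ : ℕ) : SimpleGraph (Fin n) where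
  Adj u v := u ≠ v ∧ ((u.val < n - d + ℓ ∧ v.val < n - d + ℓ) ∨
    (n - d - 1 ≤ u.val ∧ n - d - 1 ≤ v.val))
  symm := ⟨by intro u v h; exact ⟨h.1.symm, by tauto⟩⟩
  loopless := ⟨by intro v h; exact h.1 rfl⟩

/-- `h_r(n,d,ℓ) = C(n-d+ℓ, r) + (d-ℓ) C(d, r-1)`. -/
def hrfun (n d r ℓ : ℕ) : ℕ := Nat.choose (n - d + ℓ) r + (d - ℓ) * Nat.choose d (r - 1)

/-- `h(n,d,ℓ) = C(n-d+ℓ, 2) + (d-ℓ) d`. -/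
def hfun (n d ℓ : ℕ) : ℕ := Nat.choose (n - d + ℓ) 2 + (d - ℓ) * d

/-- The number of `r`-cliques of `G`. -/
noncomputable def cliqueCount {V : Type*} (G : SimpleGraph V) (r : ℕ) : ℕ :=
  {s : Finset V | G.IsNClique r s}.ncard

/-- `G` is `ℓ`-saturated: not `ℓ`-hamiltonian, but adding any edge makes it `ℓ`-hamiltonian. -/
def SimpleGraph.IsLSaturated {V : Type*} [DecidableEq V] (G : SimpleGraph V) (ℓ : ℕ) : Prop :=
  ¬ G.IsLHamiltonian ℓ ∧
    ∀ u v : V, u ≠ v → ¬ G.Adj u v → (G ⊔ SimpleGraph.edge u v).IsLHamiltonian ℓ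

/-!
Enlarge `G` to an edge-maximal nonhamiltonian graph `H`: this keeps the minimum degree and can
only add edges. For nonadjacent `u, v` in `H`, adding `uv` creates a hamiltonian cycle, so `H`
has a hamiltonian `u`–`v` path, and Ore's crossing argument on that path gives
`deg u + deg v < n`. Take a nonadjacent pair maximising `deg u + deg v`, with `k = deg u ≤ deg v`.
The at least `n - 1 - deg v ≥ k` non-neighbours of `v` all have degree at most `k`, and every
vertex of degree at least `n - k` is a neighbour of `u`, so there are at most `k` of those;
summing degrees gives `e(H) ≤ h(n,k,0)` with `d ≤ k ≤ ⌊(n-1)/2⌋`. As `h(n,k,0)` is a convex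
quadratic in `k`, it is at most its larger value at the two ends of that range.
-/

open Finset

lemma quadratic_le_max {R : Type*} [CommRing R] [LinearOrder R] [IsStrictOrderedRing R]
    {a b c x y z : R} (ha : 0 ≤ a) (hxy : x ≤ y) (hyz : y ≤ z) :
    a * y ^ 2 + b * y + c ≤ max (a * x ^ 2 + b * x + c) (a * z ^ 2 + b * z + c) := by
  rcases le_or_gt (a * (x + y) + b) 0 with h | h
  · refine le_max_of_le_left ?_
    nlinarith [mul_nonneg_of_nonpos_of_nonpos (sub_nonpos.2 hxy) h]
  · refine le_max_of_le_right ?_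
    nlinarith [mul_nonneg (sub_nonneg.2 hyz) (mul_nonneg ha (sub_nonneg.2 (hxy.trans hyz)))]

lemma two_mul_hfun_zero (n k : ℕ) : 2 * hfun n k 0 = (n - k) * (n - k - 1) + 2 * k ^ 2 := by
  rw [hfun, Nat.add_zero, Nat.sub_zero, mul_add, Nat.choose_two_right,
    Nat.mul_div_cancel' (Nat.even_mul_pred_self _).two_dvd]
  ring

lemma hfun_zero_le_max {n d k m : ℕ} (hdk : d ≤ k) (hkm : k ≤ m) (hmn : m ≤ n) :
    hfun n k 0 ≤ max (hfun n d 0) (hfun n m 0) := by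
  have hcast : ∀ j ≤ n, (2 * hfun n j 0 : ℤ) = 3 * j ^ 2 - (2 * n - 1) * j + n * (n - 1) := by
    intro j hj
    obtain ⟨t, rfl⟩ := Nat.exists_eq_add_of_le hj
    rw [← Nat.cast_two, ← Nat.cast_mul, two_mul_hfun_zero, Nat.add_sub_cancel_left]
    rcases t with _ | t <;> push_cast <;> ring
  have := quadratic_le_max (a := (3 : ℤ)) (b := -(2 * n - 1)) (c := n * (n - 1))
    (x := d) (y := k) (z := m) (by norm_num) (by exact_mod_cast hdk) (by exact_mod_cast hkm)
  simp only [neg_mul, ← sub_eq_add_neg] at this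
  rw [← hcast k (by omega), ← hcast d (by omega), ← hcast m hmn] at this
  rcases le_max_iff.mp this with h | h
  · exact le_max_of_le_left (by omega)
  · exact le_max_of_le_right (by omega)

namespace SimpleGraph

variable {V : Type*} {G : SimpleGraph V} {u v : V}

lemma Walk.IsCycle.snd_eq_or_penultimate_eq {c : G.Walk u u} (hc : c.IsCycle)
    (he : s(u, v) ∈ c.edges) : c.snd = v ∨ c.penultimate = v := by
  rw [← c.cons_tail_eq hc.not_nil, edges_cons, List.mem_cons] at he
  rcases he with he | he
  · exact Or.inl (Sym2.congr_right.mp he).symm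
  · right
    have htail : ¬ c.tail.Nil := fun h => by simp [edges_eq_nil.mpr h] at he
    rw [← c.cons_tail_eq hc.not_nil, penultimate_cons_of_not_nil _ _ htail]
    exact (hc.isPath_tail.eq_penultimate_of_mem_edges he).symm

section Hamiltonian

variable [DecidableEq V]

namespace Walk

lemma IsHamiltonian.reverse {p : G.Walk u v} (hp : p.IsHamiltonian) :
    p.reverse.IsHamiltonian := fun a => by
  rw [support_reverse, List.count_reverse]
  exact hp a

lemma IsHamiltonian.transfer {H : SimpleGraph V} {p : G.Walk u v} (hp : p.IsHamiltonian)
    (hH : ∀ e ∈ p.edges, e ∈ H.edgeSet) : (p.transfer H hH).IsHamiltonian := fun a => by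
  rw [support_transfer]
  exact hp a

lemma IsHamiltonianCycle.reverse {p : G.Walk u u} (hp : p.IsHamiltonianCycle) :
    p.reverse.IsHamiltonianCycle := by
  have := hp.finite
  cases nonempty_fintype V
  rw [isHamiltonianCycle_iff_isCycle_and_length_eq] at hp ⊢
  exact ⟨hp.1.reverse, by rw [length_reverse, hp.2]⟩

lemma IsHamiltonianCycle.transfer {H : SimpleGraph V} {p : G.Walk u u}
    (hp : p.IsHamiltonianCycle) (hH : ∀ e ∈ p.edges, e ∈ H.edgeSet) :
    (p.transfer H hH).IsHamiltonianCycle := by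
  have := hp.finite
  cases nonempty_fintype V
  rw [isHamiltonianCycle_iff_isCycle_and_length_eq] at hp ⊢
  exact ⟨hp.1.transfer hH, by rw [length_transfer, hp.2]⟩

variable [Fintype V]

lemma IsHamiltonian.isHamiltonianCycle_cons {p : G.Walk v u} (hp : p.IsHamiltonian)
    (h : G.Adj u v) (hV : 3 ≤ Fintype.card V) : (cons h p).IsHamiltonianCycle := by
  have hlen := hp.length_eq
  rw [isHamiltonianCycle_iff_isCycle_and_length_eq, cons_isCycle_iff, length_cons]
  refine ⟨⟨hp.isPath, fun he => ?_⟩, by omega⟩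
  have := hp.isPath.length_eq_one_of_mem_edges (Sym2.eq_swap ▸ he)
  omega

lemma IsHamiltonian.isHamiltonian_of_crossing {p : G.Walk u v} (hp : p.IsHamiltonian)
    (hlen : 2 ≤ p.length) {i : ℕ} (hi : i < p.length)
    (hu : G.Adj u (p.getVert (i + 1))) (hv : G.Adj (p.getVert i) v) : G.IsHamiltonian := by
  -- the hamiltonian cycle `u → pᵢ₊₁ → ⋯ → v → pᵢ → ⋯ → u`
  set q := (p.drop (i + 1)).append (cons hv.symm (p.take i).reverse)
  have hq : q.IsHamiltonian := fun a => by
    have h := hp a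
    rw [← List.take_append_drop (i + 1) p.support, List.count_append] at h
    simp only [q, support_append, drop_support_eq_support_drop_min, Nat.min_eq_left hi,
      Nat.succ_eq_add_one, support_cons, support_reverse, support_take, List.tail_cons,
      List.count_append, List.count_reverse]
    omega
  have hV : 3 ≤ Fintype.card V := by have := hp.length_eq; omega
  exact fun _ => ⟨u, _, hq.isHamiltonianCycle_cons hu hV⟩

lemma IsHamiltonian.degree_le_card_filter_adj_getVert_succ [DecidableRel G.Adj]
    {p : G.Walk u v} (hp : p.IsHamiltonian) :
    G.degree u ≤ #{i ∈ range p.length | G.Adj u (p.getVert (i + 1))} := by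
  refine card_le_card_of_surjOn (fun i => p.getVert (i + 1)) fun w hw => ?_
  obtain ⟨j, rfl, hj⟩ := mem_support_iff_exists_getVert.mp (hp.mem_support w)
  have hj0 : j ≠ 0 := by rintro rfl; simp at hw
  have hj1 : j - 1 + 1 = j := by omega
  refine ⟨j - 1, ?_, by simp only [hj1]⟩
  simp only [coe_filter, mem_range, Set.mem_ofPred_eq, hj1]
  exact ⟨by omega, by simpa using hw⟩

lemma IsHamiltonian.degree_le_card_filter_getVert_adj [DecidableRel G.Adj]
    {p : G.Walk u v} (hp : p.IsHamiltonian) :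
    G.degree v ≤ #{i ∈ range p.length | G.Adj (p.getVert i) v} := by
  refine card_le_card_of_surjOn p.getVert fun w hw => ?_
  obtain ⟨j, rfl, hj⟩ := mem_support_iff_exists_getVert.mp (hp.mem_support w)
  have hjm : j ≠ p.length := by rintro rfl; simp at hw
  refine ⟨j, ?_, rfl⟩
  simp only [coe_filter, mem_range, Set.mem_ofPred_eq]
  exact ⟨by omega, by simpa [adj_comm] using hw⟩

lemma IsHamiltonian.degree_add_degree_lt [DecidableRel G.Adj] {p : G.Walk u v}
    (hp : p.IsHamiltonian) (huv : ¬ G.Adj u v) (hG : ¬ G.IsHamiltonian) :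
    G.degree u + G.degree v < Fintype.card V := by
  have hcard : Fintype.card V = p.length + 1 := by
    have := hp.length_eq
    have : 0 < Fintype.card V := Fintype.card_pos_iff.mpr ⟨u⟩
    omega
  have hlen : 2 ≤ p.length := by
    by_contra! h
    interval_cases hm : p.length
    · exact hG (IsHamiltonian.of_card_eq_one hcard)
    · exact huv (by simpa [← hm] using p.adj_getVert_succ (i := 0) (by omega))
  have hdisj : Disjoint {i ∈ range p.length | G.Adj u (p.getVert (i + 1))}
      {i ∈ range p.length | G.Adj (p.getVert i) v} :=
    disjoint_filter.2 fun i hi hui hiv =>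
      hG (hp.isHamiltonian_of_crossing hlen (mem_range.1 hi) hui hiv)
  calc G.degree u + G.degree v
      ≤ #{i ∈ range p.length | G.Adj u (p.getVert (i + 1))} +
          #{i ∈ range p.length | G.Adj (p.getVert i) v} :=
        add_le_add hp.degree_le_card_filter_adj_getVert_succ
          hp.degree_le_card_filter_getVert_adj
    _ = #({i ∈ range p.length | G.Adj u (p.getVert (i + 1))} ∪
          {i ∈ range p.length | G.Adj (p.getVert i) v}) := (card_union_of_disjoint hdisj).symm
    _ ≤ #(range p.length) := card_le_card (union_subset (filter_subset _ _) (filter_subset _ _))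
    _ < Fintype.card V := by rw [card_range]; omega

end Walk

variable [Fintype V]

lemma isHamiltonian_top (hV : 3 ≤ Fintype.card V) : (⊤ : SimpleGraph V).IsHamiltonian := by
  have hcycle : cycleGraph (Fintype.card V) ⊑ (⊤ : SimpleGraph V) :=
    isContained_top_iff.mpr ⟨(Fintype.equivFin V).symm.toEmbedding⟩
  obtain ⟨v, p, hp, hlen⟩ := (cycleGraph_isContained_iff (by omega)).mp hcycle
  exact fun _ => ⟨v, p, Walk.isHamiltonianCycle_iff_isCycle_and_length_eq.mpr ⟨hp, hlen⟩⟩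

open Walk in
lemma exists_isHamiltonian_walk_of_isHamiltonian_sup_edge
    (hG : ¬ G.IsHamiltonian) (huv : u ≠ v) (h : (G ⊔ edge u v).IsHamiltonian) :
    ∃ p : G.Walk u v, p.IsHamiltonian := by
  have : Nontrivial V := ⟨u, v, huv⟩
  have hedges : (G ⊔ edge u v).edgeSet = insert s(u, v) G.edgeSet := by
    rw [edgeSet_sup, edgeSet_edge_of_ne huv, Set.union_singleton]
  obtain ⟨c, hc⟩ := h.exists_isHamiltonianCycle u
  have he : s(u, v) ∈ c.edges := by
    by_contra he
    refine hG fun _ => ⟨u, c.transfer G fun e hec => ?_, hc.transfer _⟩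
    have := hedges ▸ c.edges_subset_edgeSet hec
    exact this.resolve_left (by rintro rfl; exact he hec)
  wlog hsnd : c.snd = v generalizing c
  · refine this c.reverse hc.reverse (by simpa using he) ?_
    rw [snd_reverse]
    exact (hc.isCycle.snd_eq_or_penultimate_eq he).resolve_left hsnd
  have hnew : s(u, c.snd) ∉ c.tail.edges :=
    ((cons_isCycle_iff _ _).mp (c.cons_tail_eq hc.not_nil ▸ hc.isCycle)).2
  have hsub : ∀ e ∈ c.tail.edges, e ∈ G.edgeSet := fun e hec => by
    have := hedges ▸ c.tail.edges_subset_edgeSet hec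
    refine this.resolve_left ?_
    rintro rfl
    rw [show s(u, v) = s(u, c.snd) by rw [hsnd]] at hec
    exact hnew hec
  exact ⟨((c.tail.transfer G hsub).reverse).copy rfl hsnd, fun a => by
    rw [support_copy]
    exact (hc.isHamiltonian_tail.transfer hsub).reverse a⟩

lemma degree_add_degree_lt_of_maximal_not_isHamiltonian [DecidableRel G.Adj]
    (hG : Maximal (fun H : SimpleGraph V => ¬ H.IsHamiltonian) G) (huv : Gᶜ.Adj u v) :
    G.degree u + G.degree v < Fintype.card V := by
  obtain ⟨hne, hnadj⟩ := (compl_adj G u v).mp huv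
  have hsat : (G ⊔ edge u v).IsHamiltonian := by
    by_contra h
    exact hnadj (hG.2 h le_sup_left (Or.inr ((edge_adj u v u v).mpr ⟨Or.inl ⟨rfl, rfl⟩, hne⟩)))
  obtain ⟨p, hp⟩ := exists_isHamiltonian_walk_of_isHamiltonian_sup_edge hG.1 hne hsat
  exact hp.degree_add_degree_lt hnadj hG.1

end Hamiltonian

section Counting

variable [Fintype V] [DecidableRel G.Adj]

lemma sum_degrees_le_of_card_filter_degree {k : ℕ} (hk : 2 * k < Fintype.card V)
    (hlow : k ≤ #{w | G.degree w ≤ k}) (hhigh : #{w | Fintype.card V - k ≤ G.degree w} ≤ k) :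
    ∑ w, G.degree w ≤ (Fintype.card V - k) * (Fintype.card V - k - 1) + 2 * k ^ 2 := by
  have hpointwise : ∀ w, G.degree w + (Fintype.card V - 2 * k - 1) *
      (if G.degree w ≤ k then 1 else 0) ≤
      (Fintype.card V - k - 1) + k * (if Fintype.card V - k ≤ G.degree w then 1 else 0) :=
    fun w => by
      have := G.degree_lt_card_verts w
      split_ifs <;> omega
  have hsum := sum_le_sum fun w (_ : w ∈ univ) => hpointwise w
  simp only [sum_add_distrib, ← mul_sum, sum_boole, Nat.cast_id, sum_const, card_univ,
    smul_eq_mul] at hsum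
  have hL := Nat.mul_le_mul_left (Fintype.card V - 2 * k - 1) hlow
  have hH := Nat.mul_le_mul_left k hhigh
  generalize ∑ w, G.degree w = S at hsum ⊢
  generalize #{w | G.degree w ≤ k} = L at hsum hL
  generalize #{w | Fintype.card V - k ≤ G.degree w} = H at hsum hH
  generalize Fintype.card V = n at hk hsum hL ⊢
  obtain ⟨t, rfl⟩ : ∃ t, n = 2 * k + 1 + t := ⟨n - 2 * k - 1, by omega⟩
  simp only [show 2 * k + 1 + t - 2 * k - 1 = t by omega,
    show 2 * k + 1 + t - k = k + 1 + t by omega, show k + 1 + t - 1 = k + t by omega] at hsum hL ⊢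
  nlinarith

variable [DecidableEq V]

lemma card_edgeFinset_le_hfun_of_maximal_pair
    (hsum : G.degree u + G.degree v < Fintype.card V) (hle : G.degree u ≤ G.degree v)
    (hmax : ∀ x y, Gᶜ.Adj x y → G.degree x + G.degree y ≤ G.degree u + G.degree v) :
    #G.edgeFinset ≤ hfun (Fintype.card V) (G.degree u) 0 := by
  have hlow : G.degree u ≤ #{w | G.degree w ≤ G.degree u} := calc
    G.degree u ≤ Gᶜ.degree v := by rw [degree_compl]; omega
    _ ≤ _ := card_le_card fun w hw => by
      have := hmax w v (Gᶜ.adj_symm ((Gᶜ.mem_neighborFinset v w).mp hw))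
      simp only [mem_filter, mem_univ, true_and]
      omega
  have hhigh : #{w | Fintype.card V - G.degree u ≤ G.degree w} ≤ G.degree u :=
    card_le_card fun w hw => by
      simp only [mem_filter, mem_univ, true_and] at hw
      rw [mem_neighborFinset]
      by_contra hnadj
      rcases eq_or_ne u w with rfl | hne
      · omega
      · have := hmax u w ((compl_adj G u w).mpr ⟨hne, hnadj⟩)
        omega
  have := sum_degrees_le_of_card_filter_degree (by omega) hlow hhigh
  rw [sum_degrees_eq_twice_card_edges, ← two_mul_hfun_zero] at this
  omega

theorem card_edgeFinset_le_max_hfun {d : ℕ} (hG : G ≠ ⊤)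
    (hOre : ∀ u v, Gᶜ.Adj u v → G.degree u + G.degree v < Fintype.card V)
    (hmin : ∀ v, d ≤ G.degree v) :
    #G.edgeFinset ≤ max (hfun (Fintype.card V) d 0)
      (hfun (Fintype.card V) ((Fintype.card V - 1) / 2) 0) := by
  obtain ⟨a, b, hab, hnadj⟩ := ne_top_iff_exists_not_adj.mp hG
  have : Nonempty Gᶜ.Dart := ⟨⟨(a, b), (compl_adj G a b).mpr ⟨hab, hnadj⟩⟩⟩
  obtain ⟨⟨⟨u, v⟩, huv⟩, hmax⟩ :=
    Finite.exists_max fun e : Gᶜ.Dart => G.degree e.fst + G.degree e.snd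
  replace hmax : ∀ x y, Gᶜ.Adj x y → G.degree x + G.degree y ≤ G.degree u + G.degree v :=
    fun x y h => hmax ⟨(x, y), h⟩
  wlog hle : G.degree u ≤ G.degree v generalizing u v
  · exact this v u huv.symm (fun x y h => by have := hmax x y h; omega) (by omega)
  have hsum := hOre u v huv
  calc #G.edgeFinset ≤ hfun (Fintype.card V) (G.degree u) 0 :=
        card_edgeFinset_le_hfun_of_maximal_pair hsum hle hmax
    _ ≤ _ := hfun_zero_le_max (hmin u) (by omega) (by omega)

end Counting

end SimpleGraph

/-- **Erdős' theorem.** If `0 < d ≤ ⌊(n-1)/2⌋` and `G` is an `n`-vertex nonhamiltonian graph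
with minimum degree at least `d`, then `e(G) ≤ max{h(n,d,0), h(n,⌊(n-1)/2⌋,0)}`. -/
theorem erdos_nonhamiltonian_edge_bound {n d : ℕ} (hd0 : 0 < d) (hd : d ≤ (n - 1) / 2)
    (G : SimpleGraph (Fin n)) [DecidableRel G.Adj]
    (hham : ¬ G.IsHamiltonian) (hmin : ∀ v : Fin n, d ≤ G.degree v) :
    G.edgeSet.ncard ≤ max (hfun n d 0) (hfun n ((n - 1) / 2) 0) := by
  obtain ⟨H, hGH, hH⟩ :=
    Finite.exists_le_maximal (p := fun H : SimpleGraph (Fin n) => ¬ H.IsHamiltonian) hham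
  classical
  have hHtop : H ≠ ⊤ := by
    rintro rfl
    exact hH.1 (isHamiltonian_top (by rw [Fintype.card_fin]; omega))
  have hbound := card_edgeFinset_le_max_hfun hHtop
    (fun u v huv => degree_add_degree_lt_of_maximal_not_isHamiltonian hH huv)
    (fun v => (hmin v).trans (G.degree_le_of_le hGH))
  rw [Fintype.card_fin] at hbound
  calc G.edgeSet.ncard ≤ H.edgeSet.ncard := Set.ncard_le_ncard (edgeSet_mono hGH)
    _ = #H.edgeFinset := by rw [← coe_edgeFinset, Set.ncard_coe_finset]
    _ ≤ _ := hbound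
end

section
/- Fix integers n, ℓ, r with 0 ≤ ℓ ≤ n − 1 and r ≥ 2, and let a, b be integers with ℓ ≤ a ≤ b ≤ ⌊(n+ℓ−1)/2⌋. Then for every integer k with a ≤ k ≤ b, h_r(n, k, ℓ) ≤ max{ h_r(n, a, ℓ), h_r(n, b, ℓ) }. -/
open SimpleGraph

/-!
The function `d ↦ h_r(n,d,ℓ)` is discretely convex on all of `ℕ` (its forward differences are
nondecreasing), truncated subtractions included: `C(n-d+ℓ, r)` is a nondecreasing convex function
of `n - d`, which is itself convex in `d`, and `(d-ℓ) C(d, r-1)` is a product of nonnegative,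
nondecreasing, convex functions. A discretely convex function is nondecreasing from `k` on or
nonincreasing up to `k`, so its value at `k` is bounded by one of the endpoint values.
-/

def DiscreteConvex {β : Type*} [Sub β] [Preorder β] (f : ℕ → β) : Prop :=
  Monotone fun n => f (n + 1) - f n

namespace DiscreteConvex

section OrderedAddCommGroup

variable {β : Type*} [AddCommGroup β] [PartialOrder β] {f g : ℕ → β}

theorem comp_add_right (hf : DiscreteConvex f) (ℓ : ℕ) : DiscreteConvex fun m => f (m + ℓ) := by
  intro i j hij
  simpa only [Nat.add_right_comm] using hf (Nat.add_le_add_right hij ℓ)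

variable [IsOrderedAddMonoid β]

theorem add (hf : DiscreteConvex f) (hg : DiscreteConvex g) : DiscreteConvex (f + g) := by
  intro i j hij
  simp only [Pi.add_apply, add_sub_add_comm]
  exact add_le_add (hf hij) (hg hij)

theorem comp_tsub (hf : DiscreteConvex f) (hf_mono : Monotone f) (n : ℕ) :
    DiscreteConvex fun d => f (n - d) := by
  intro i j hij
  dsimp only
  rcases le_or_gt n j with hnj | hjn
  · rw [Nat.sub_eq_zero_of_le hnj, Nat.sub_eq_zero_of_le (Nat.le_succ_of_le hnj), sub_self]
    exact sub_nonpos.mpr (hf_mono (by omega))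
  · have reflect : ∀ d < n,
        f (n - (d + 1)) - f (n - d) = -(f (n - (d + 1) + 1) - f (n - (d + 1))) :=
      fun d hd => by rw [show n - (d + 1) + 1 = n - d by omega, neg_sub]
    rw [reflect i (by omega), reflect j hjn]
    exact neg_le_neg (hf (by omega))

end OrderedAddCommGroup

theorem le_max {β : Type*} [AddCommGroup β] [LinearOrder β] [IsOrderedAddMonoid β] {f : ℕ → β}
    (hf : DiscreteConvex f) {a b k : ℕ} (hak : a ≤ k) (hkb : k ≤ b) :
    f k ≤ max (f a) (f b) := by
  rcases le_total 0 (f (k + 1) - f k) with hup | hdown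
  · have : MonotoneOn f (Set.Ici k) := monotoneOn_of_le_add_one Set.ordConnected_Ici
      fun j _ hj _ => sub_nonneg.mp (hup.trans (hf hj))
    exact le_max_of_le_right (this Set.self_mem_Ici hkb hkb)
  · have : AntitoneOn f (Set.Iic k) := antitoneOn_of_add_one_le Set.ordConnected_Iic
      fun j _ _ hj => sub_nonpos.mp ((hf (Nat.le_of_succ_le hj)).trans hdown)
    exact le_max_of_le_left (this hak Set.self_mem_Iic hak)

theorem mul {β : Type*} [CommRing β] [PartialOrder β] [IsOrderedRing β] {f g : ℕ → β}
    (hf : DiscreteConvex f) (hg : DiscreteConvex g) (hf_mono : Monotone f) (hg_mono : Monotone g)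
    (hf_nonneg : ∀ n, 0 ≤ f n) (hg_nonneg : ∀ n, 0 ≤ g n) : DiscreteConvex (f * g) := by
  have leibniz : (fun n => (f * g) (n + 1) - (f * g) n) =
      (fun n => f (n + 1)) * (fun n => g (n + 1) - g n) + (fun n => f (n + 1) - f n) * g := by
    funext n
    simp only [Pi.mul_apply, Pi.add_apply]
    ring
  rw [DiscreteConvex, leibniz]
  exact (Monotone.mul (fun _ _ h => hf_mono (Nat.succ_le_succ h)) hg
      (fun _ => hf_nonneg _) (fun n => sub_nonneg.mpr (hg_mono n.le_succ))).add
    (Monotone.mul hf hg_mono (fun n => sub_nonneg.mpr (hf_mono n.le_succ)) hg_nonneg)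

end DiscreteConvex

theorem monotone_natCast_choose (s : ℕ) : Monotone fun m : ℕ => (m.choose s : ℤ) :=
  Nat.mono_cast.comp (Nat.choose_mono s)

theorem discreteConvex_natCast_choose (s : ℕ) : DiscreteConvex fun m : ℕ => (m.choose s : ℤ) := by
  cases s with
  | zero => simpa [DiscreteConvex] using monotone_const
  | succ t =>
    intro i j hij
    simp only [Nat.choose_succ_succ', Nat.cast_add, add_sub_cancel_right]
    exact monotone_natCast_choose t hij

theorem monotone_natCast_tsub (ℓ : ℕ) : Monotone fun d : ℕ => ((d - ℓ : ℕ) : ℤ) :=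
  fun _ _ _ => by dsimp only; omega

theorem discreteConvex_natCast_tsub (ℓ : ℕ) : DiscreteConvex fun d : ℕ => ((d - ℓ : ℕ) : ℤ) :=
  fun _ _ _ => by dsimp only; omega

theorem discreteConvex_hrfun (n r ℓ : ℕ) : DiscreteConvex fun d => (hrfun n d r ℓ : ℤ) := by
  have split : (fun d => (hrfun n d r ℓ : ℤ)) =
      (fun d => ((n - d + ℓ).choose r : ℤ)) +
        (fun d : ℕ => ((d - ℓ : ℕ) : ℤ)) * fun d => (d.choose (r - 1) : ℤ) := by
    funext d
    simp [hrfun]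
  rw [split]
  refine DiscreteConvex.add ?_ ?_
  · exact ((discreteConvex_natCast_choose r).comp_add_right ℓ).comp_tsub
      (fun _ _ h => monotone_natCast_choose r (Nat.add_le_add_right h ℓ)) n
  · exact (discreteConvex_natCast_tsub ℓ).mul (discreteConvex_natCast_choose _)
      (monotone_natCast_tsub ℓ) (monotone_natCast_choose _) (fun _ => Int.natCast_nonneg _)
      (fun _ => Int.natCast_nonneg _)

theorem hrfun_max_at_endpoints_general {n ℓ r a b : ℕ} :
    ∀ k : ℕ, a ≤ k → k ≤ b → hrfun n k r ℓ ≤ max (hrfun n a r ℓ) (hrfun n b r ℓ) := by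
  intro k hak hkb
  exact_mod_cast (discreteConvex_hrfun n r ℓ).le_max hak hkb

/-- Convexity of `h_r(n,·,ℓ)`: on any subinterval `[a,b]` of `[ℓ, ⌊(n+ℓ-1)/2⌋]`, the function
is maximized at an endpoint. -/
theorem hrfun_max_at_endpoints {n ℓ r a b : ℕ} (hln : ℓ + 1 ≤ n) (hr : 2 ≤ r)
    (hla : ℓ ≤ a) (hab : a ≤ b) (hb : b ≤ (n + ℓ - 1) / 2) :
    ∀ k : ℕ, a ≤ k → k ≤ b → hrfun n k r ℓ ≤ max (hrfun n a r ℓ) (hrfun n b r ℓ) :=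
  hrfun_max_at_endpoints_general
end
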